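/- arXiv:1809.01491 — 2 statements merged into one kernel-verified Lean document; each statement's English description precedes it below -/
import Mathlib

section
/- In any finite flow network with source s, sink t, and nonnegative arc capacities, the maximum value of a feasible (s,t)-flow equals the minimum capacity over all (s,t)-cuts. -/
open Finset

variable {V : Type*}

/-- Value of a flow `x` at node `s`: net flow out of `s`. -/
def flowValueFrom [DecidableEq V] (E : Finset (V × V)) (x : V × V → ℝ) (s : V) : ℝ :=
  ∑ e ∈ E.filter (fun e => e.1 = s), x e - ∑ e ∈ E.filter (fun e => e.2 = s), x e

/-- Feasible (s,t)-flow: capacity constraints, zero outside `E`, conservation away from s,t. -/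
def IsFeasibleFlow [DecidableEq V] (E : Finset (V × V)) (u x : V × V → ℝ) (s t : V) : Prop :=
  (∀ e ∈ E, 0 ≤ x e ∧ x e ≤ u e) ∧
  (∀ e, e ∉ E → x e = 0) ∧
  (∀ v : V, v ≠ s → v ≠ t →
    ∑ e ∈ E.filter (fun e => e.2 = v), x e = ∑ e ∈ E.filter (fun e => e.1 = v), x e)

/-- Arcs leaving the node set `S`. -/
def cutArcs [DecidableEq V] (E : Finset (V × V)) (S : Finset V) : Finset (V × V) :=
  E.filter (fun e => e.1 ∈ S ∧ e.2 ∉ S)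

/-- Arcs entering the node set `S`. -/
def backArcs [DecidableEq V] (E : Finset (V × V)) (S : Finset V) : Finset (V × V) :=
  E.filter (fun e => e.1 ∉ S ∧ e.2 ∈ S)

/-- Capacity of the cut induced by `S`. -/
def cutCapacity [DecidableEq V] (E : Finset (V × V)) (u : V × V → ℝ) (S : Finset V) : ℝ :=
  ∑ e ∈ cutArcs E S, u e

/-MFMC aux lemmas-/
/-- Net outflow of `x` at `v`. -/
def netOut [DecidableEq V] (E : Finset (V × V)) (x : V × V → ℝ) (v : V) : ℝ :=
  ∑ e ∈ E.filter (fun e => e.1 = v), x e - ∑ e ∈ E.filter (fun e => e.2 = v), x e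

lemma netOut_add_smul [DecidableEq V] (E : Finset (V × V)) (x c : V × V → ℝ) (δ : ℝ) (v : V) :
    netOut E (fun e => x e + δ * c e) v = netOut E x v + δ * netOut E c v := by
  simp only [netOut, Finset.sum_add_distrib, mul_sub, Finset.mul_sum]
  ring

lemma sum_fiber_fst [DecidableEq V] (E : Finset (V × V)) (x : V × V → ℝ) (S : Finset V) :
    ∑ v ∈ S, ∑ e ∈ E.filter (fun e => e.1 = v), x e
      = ∑ e ∈ E.filter (fun e => e.1 ∈ S), x e := by
  rw [← Finset.sum_fiberwise_of_maps_to (g := fun e : V × V => e.1)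
      (fun e he => (Finset.mem_filter.mp he).2) x]
  refine Finset.sum_congr rfl fun v hv => ?_
  rw [Finset.filter_filter]
  exact Finset.sum_congr (Finset.filter_congr fun e he => by
    constructor
    · exact fun h => ⟨by simp only [h]; exact hv, h⟩
    · exact fun h => h.2) (fun _ _ => rfl)

lemma sum_fiber_snd [DecidableEq V] (E : Finset (V × V)) (x : V × V → ℝ) (S : Finset V) :
    ∑ v ∈ S, ∑ e ∈ E.filter (fun e => e.2 = v), x e
      = ∑ e ∈ E.filter (fun e => e.2 ∈ S), x e := by
  rw [← Finset.sum_fiberwise_of_maps_to (g := fun e : V × V => e.2)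
      (fun e he => (Finset.mem_filter.mp he).2) x]
  refine Finset.sum_congr rfl fun v hv => ?_
  rw [Finset.filter_filter]
  exact Finset.sum_congr (Finset.filter_congr fun e he => by
    constructor
    · exact fun h => ⟨by simp only [h]; exact hv, h⟩
    · exact fun h => h.2) (fun _ _ => rfl)

lemma sum_netOut [DecidableEq V] (E : Finset (V × V)) (x : V × V → ℝ) (S : Finset V) :
    ∑ v ∈ S, netOut E x v = ∑ e ∈ cutArcs E S, x e - ∑ e ∈ backArcs E S, x e := by
  simp only [netOut]
  rw [Finset.sum_sub_distrib, sum_fiber_fst, sum_fiber_snd]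
  have h1 := Finset.sum_filter_add_sum_filter_not (E.filter (fun e => e.1 ∈ S))
    (fun e => e.2 ∈ S) x
  have h2 := Finset.sum_filter_add_sum_filter_not (E.filter (fun e => e.2 ∈ S))
    (fun e => e.1 ∈ S) x
  have ecut : cutArcs E S = (E.filter (fun e => e.1 ∈ S)).filter (fun e => ¬ e.2 ∈ S) := by
    rw [Finset.filter_filter]; rfl
  have eback : backArcs E S = (E.filter (fun e => e.2 ∈ S)).filter (fun e => ¬ e.1 ∈ S) := by
    rw [Finset.filter_filter]
    unfold backArcs
    apply Finset.filter_congr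
    intro e _
    exact and_comm
  have e3 : (E.filter fun a => a.1 ∈ S ∧ a.2 ∈ S) = (E.filter fun a => a.2 ∈ S ∧ a.1 ∈ S) := by
    apply Finset.filter_congr
    intro e _
    exact and_comm
  have e3 : (E.filter (fun e => e.1 ∈ S)).filter (fun a => a.2 ∈ S)
      = (E.filter (fun e => e.2 ∈ S)).filter (fun a => a.1 ∈ S) := by
    rw [Finset.filter_filter, Finset.filter_filter]
    apply Finset.filter_congr
    intro e _
    exact and_comm
  rw [e3] at h1
  rw [ecut, eback]
  linarith

lemma value_eq_cut_sub_back [DecidableEq V] {E : Finset (V × V)} {u x : V × V → ℝ} {s t : V}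
    (hx : IsFeasibleFlow E u x s t) {S : Finset V} (hs : s ∈ S) (ht : t ∉ S) :
    flowValueFrom E x s = ∑ e ∈ cutArcs E S, x e - ∑ e ∈ backArcs E S, x e := by
  rw [← sum_netOut]
  have : ∀ v ∈ S, v ≠ s → netOut E x v = 0 := by
    intro v hv hvs
    have hvt : v ≠ t := fun h => ht (h ▸ hv)
    have := hx.2.2 v hvs hvt
    simp [netOut, this]
  rw [← Finset.add_sum_erase S _ hs]
  rw [Finset.sum_eq_zero (fun v hv => this v (Finset.mem_of_mem_erase hv)
    (Finset.ne_of_mem_erase hv))]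
  simp [flowValueFrom, netOut]

lemma value_le_cutCapacity [DecidableEq V] {E : Finset (V × V)} {u x : V × V → ℝ} {s t : V}
    (hx : IsFeasibleFlow E u x s t) (hu : ∀ e ∈ E, 0 ≤ u e) {S : Finset V}
    (hs : s ∈ S) (ht : t ∉ S) :
    flowValueFrom E x s ≤ cutCapacity E u S := by
  rw [value_eq_cut_sub_back hx hs ht]
  have h1 : ∑ e ∈ cutArcs E S, x e ≤ ∑ e ∈ cutArcs E S, u e :=
    Finset.sum_le_sum fun e he => (hx.1 e (Finset.mem_filter.mp he).1).2
  have h2 : 0 ≤ ∑ e ∈ backArcs E S, x e :=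
    Finset.sum_nonneg fun e he => (hx.1 e (Finset.mem_filter.mp he).1).1
  unfold cutCapacity
  linarith

/-- Residual step relation. -/
def resStep [DecidableEq V] (E : Finset (V × V)) (u x : V × V → ℝ) (v w : V) : Prop :=
  ((v, w) ∈ E ∧ x (v, w) < u (v, w)) ∨ ((w, v) ∈ E ∧ 0 < x (w, v))

lemma netOut_indicator [DecidableEq V] (E : Finset (V × V)) {a b : V} (hab : (a, b) ∈ E)
    (hne : a ≠ b) (w : V) :
    netOut E (fun e => if e = (a, b) then (1 : ℝ) else 0) w
      = (if w = a then 1 else 0) - (if w = b then 1 else 0) := by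
  unfold netOut
  rw [Finset.sum_ite_eq' (E.filter (fun e => e.1 = w)) ((a, b)) (fun _ => (1:ℝ))]
  rw [Finset.sum_ite_eq' (E.filter (fun e => e.2 = w)) ((a, b)) (fun _ => (1:ℝ))]
  simp only [Finset.mem_filter, hab, true_and]
  by_cases h1 : w = a <;> by_cases h2 : w = b <;>
    simp_all [eq_comm]

lemma exists_aug [DecidableEq V] {E : Finset (V × V)} {u x : V × V → ℝ}
    (hx : ∀ e ∈ E, 0 ≤ x e ∧ x e ≤ u e) {s v : V}
    (h : Relation.ReflTransGen (resStep E u x) s v) :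
    ∃ c : V × V → ℝ, (∀ e, e ∉ E → c e = 0) ∧
      (∀ w, netOut E c w = (if w = s then 1 else 0) - (if w = v then 1 else 0)) ∧
      ∃ ε > (0:ℝ), ∀ δ : ℝ, 0 < δ → δ ≤ ε →
        ∀ e ∈ E, 0 ≤ x e + δ * c e ∧ x e + δ * c e ≤ u e := by
  induction h with
  | refl =>
      refine ⟨0, fun e _ => rfl, fun w => by simp [netOut], 1, one_pos, ?_⟩
      intro δ hδ _ e he
      simpa using hx e he
  | @tail b w hsb hbw ih =>
      obtain ⟨c, hc0, hcdiv, ε, hε, hfe⟩ := ih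
      by_cases hbweq : b = w
      · exact hbweq ▸ ⟨c, hc0, hcdiv, ε, hε, hfe⟩
      have hbw' : b ≠ w := hbweq
      rcases hbw with ⟨hm, hlt⟩ | ⟨hm, hpos⟩
      · -- forward arc (b, w)
        set M : ℝ := |c (b, w)| + 1 with hM
        have hMpos : (0:ℝ) < M := by positivity
        refine ⟨fun e => c e + if e = (b, w) then 1 else 0, ?_, ?_, ?_⟩
        · intro e he
          simp only [hc0 e he, if_neg (show ¬ e = (b, w) from fun h => he (h ▸ hm)), add_zero]
        · intro w'
          have : netOut E (fun e => c e + (1:ℝ) * (if e = (b, w) then 1 else 0)) w'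
              = netOut E c w' + 1 * netOut E (fun e => if e = (b, w) then (1:ℝ) else 0) w' :=
            netOut_add_smul E c _ 1 w'
          simp only [one_mul] at this
          rw [this, hcdiv, netOut_indicator E hm hbw']
          ring
        · refine ⟨min ε ((u (b, w) - x (b, w)) / M), lt_min hε (div_pos (by linarith) hMpos), ?_⟩
          intro δ hδ hδle e he
          by_cases hebw : e = (b, w)
          · subst hebw
            have h1 := hfe δ hδ (le_trans hδle (min_le_left _ _)) _ he
            have hcu : c (b, w) + 1 ≤ M := by
              rw [hM]; nlinarith [abs_nonneg (c (b,w)), le_abs_self (c (b,w))]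
            have hδM : δ * M ≤ u (b, w) - x (b, w) := by
              have := min_le_right ε ((u (b, w) - x (b, w)) / M)
              have h2 : δ ≤ (u (b, w) - x (b, w)) / M := le_trans hδle this
              calc δ * M ≤ ((u (b, w) - x (b, w)) / M) * M := by
                    apply mul_le_mul_of_nonneg_right h2 (le_of_lt hMpos)
                _ = u (b, w) - x (b, w) := by field_simp
            constructor
            · simp only [if_pos rfl, if_true]
              nlinarith [h1.1]
            · simp only [if_pos rfl, if_true]
              have : δ * (c (b, w) + 1) ≤ δ * M := by
                apply mul_le_mul_of_nonneg_left hcu (le_of_lt hδ)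
              nlinarith
          · simp only [if_neg hebw, add_zero]
            exact hfe δ hδ (le_trans hδle (min_le_left _ _)) e he
      · -- backward arc (w, b)
        set M : ℝ := |c (w, b)| + 1 with hM
        have hMpos : (0:ℝ) < M := by positivity
        refine ⟨fun e => c e - if e = (w, b) then 1 else 0, ?_, ?_, ?_⟩
        · intro e he
          simp only [hc0 e he, if_neg (show ¬ e = (w, b) from fun h => he (h ▸ hm)), sub_zero]
        · intro w'
          have : netOut E (fun e => c e + (-1:ℝ) * (if e = (w, b) then 1 else 0)) w'
              = netOut E c w' + (-1) * netOut E (fun e => if e = (w, b) then (1:ℝ) else 0) w' :=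
            netOut_add_smul E c _ (-1) w'
          have heq : (fun e => c e + (-1:ℝ) * (if e = (w, b) then 1 else 0))
              = fun e => c e - if e = (w, b) then 1 else 0 := by
            funext e; ring
          rw [heq] at this
          rw [this, hcdiv, netOut_indicator E hm (Ne.symm hbw')]
          ring
        · refine ⟨min ε (x (w, b) / M), lt_min hε (div_pos hpos hMpos), ?_⟩
          intro δ hδ hδle e he
          by_cases hebw : e = (w, b)
          · subst hebw
            have h1 := hfe δ hδ (le_trans hδle (min_le_left _ _)) _ he
            have hcu : 1 - c (w, b) ≤ M := by
              rw [hM]; nlinarith [abs_nonneg (c (w,b)), neg_abs_le (c (w,b))]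
            have hδM : δ * M ≤ x (w, b) := by
              have h2 : δ ≤ x (w, b) / M := le_trans hδle (min_le_right _ _)
              calc δ * M ≤ (x (w, b) / M) * M := by
                    apply mul_le_mul_of_nonneg_right h2 (le_of_lt hMpos)
                _ = x (w, b) := by field_simp
            constructor
            · simp only [if_pos rfl, if_true]
              have : δ * (1 - c (w, b)) ≤ δ * M :=
                mul_le_mul_of_nonneg_left hcu (le_of_lt hδ)
              nlinarith
            · simp only [if_pos rfl, if_true]
              nlinarith [h1.2]
          · simp only [if_neg hebw, sub_zero]
            exact hfe δ hδ (le_trans hδle (min_le_left _ _)) e he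

lemma netOut_eq_zero [DecidableEq V] {E : Finset (V × V)} {u x : V × V → ℝ} {s t : V}
    (hx : IsFeasibleFlow E u x s t) {v : V} (hvs : v ≠ s) (hvt : v ≠ t) :
    netOut E x v = 0 := by
  have := hx.2.2 v hvs hvt
  simp [netOut, this]


/-- Max-flow min-cut theorem. -/
theorem max_flow_min_cut [Fintype V] [DecidableEq V] (E : Finset (V × V)) (u : V × V → ℝ)
    (s t : V) (hst : s ≠ t) (hu : ∀ e ∈ E, 0 ≤ u e) :
    ∃ F : ℝ,
      IsGreatest {v | ∃ x, IsFeasibleFlow E u x s t ∧ flowValueFrom E x s = v} F ∧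
      IsLeast {c | ∃ S : Finset V, s ∈ S ∧ t ∉ S ∧ cutCapacity E u S = c} F := by
  classical
  set K : Set (V × V → ℝ) := {x | IsFeasibleFlow E u x s t} with hK
  have hzero : (0 : V × V → ℝ) ∈ K := by
    refine ⟨fun e he => ⟨le_refl _, hu e he⟩, fun e _ => rfl, fun v _ _ => by simp⟩
  have hKclosed : IsClosed K := by
    have hKeq : K = ({x : V × V → ℝ | ∀ e ∈ E, 0 ≤ x e ∧ x e ≤ u e}
        ∩ ({x | ∀ e ∉ E, x e = 0}
        ∩ {x | ∀ v : V, v ≠ s → v ≠ t →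
            ∑ e ∈ E.filter (fun e => e.2 = v), x e
              = ∑ e ∈ E.filter (fun e => e.1 = v), x e})) := by
      ext x
      simp only [hK, Set.mem_setOf_eq, Set.mem_inter_iff, IsFeasibleFlow]
    rw [hKeq]
    refine IsClosed.inter ?_ (IsClosed.inter ?_ ?_)
    · have : {x : V × V → ℝ | ∀ e ∈ E, 0 ≤ x e ∧ x e ≤ u e}
          = ⋂ e ∈ E, ({x : V × V → ℝ | 0 ≤ x e} ∩ {x | x e ≤ u e}) := by
        ext x; simp [Set.mem_iInter]
      rw [this]
      exact isClosed_biInter fun e _ =>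
        (isClosed_le continuous_const (continuous_apply e)).inter
          (isClosed_le (continuous_apply e) continuous_const)
    · have : {x : V × V → ℝ | ∀ e ∉ E, x e = 0}
          = ⋂ (e : V × V) (_ : e ∉ E), {x : V × V → ℝ | x e = 0} := by
        ext x; simp [Set.mem_iInter]
      rw [this]
      exact isClosed_iInter fun e => isClosed_iInter fun _ =>
        isClosed_eq (continuous_apply e) continuous_const
    · have : {x : V × V → ℝ | ∀ v : V, v ≠ s → v ≠ t →
            ∑ e ∈ E.filter (fun e => e.2 = v), x e
              = ∑ e ∈ E.filter (fun e => e.1 = v), x e}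
          = ⋂ (v : V) (_ : v ≠ s) (_ : v ≠ t),
              {x : V × V → ℝ | ∑ e ∈ E.filter (fun e => e.2 = v), x e
                = ∑ e ∈ E.filter (fun e => e.1 = v), x e} := by
        ext x; simp [Set.mem_iInter]
      rw [this]
      exact isClosed_iInter fun v => isClosed_iInter fun _ => isClosed_iInter fun _ =>
        isClosed_eq (continuous_finset_sum _ fun e _ => continuous_apply e)
          (continuous_finset_sum _ fun e _ => continuous_apply e)
  have hKsub : K ⊆ Set.Icc (fun _ => 0) (fun e => max (u e) 0) := by
    intro x hx
    constructor
    · intro e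
      by_cases he : e ∈ E
      · exact (hx.1 e he).1
      · rw [hx.2.1 e he]
    · intro e
      by_cases he : e ∈ E
      · exact le_trans (hx.1 e he).2 (le_max_left _ _)
      · rw [hx.2.1 e he]; exact le_max_right _ _
  have hKcomp : IsCompact K := IsCompact.of_isClosed_subset isCompact_Icc hKclosed hKsub
  have hcont : Continuous fun x : V × V → ℝ => flowValueFrom E x s := by
    unfold flowValueFrom
    exact (continuous_finset_sum _ fun e _ => continuous_apply e).sub
      (continuous_finset_sum _ fun e _ => continuous_apply e)
  obtain ⟨x, hxK, hxmax⟩ := hKcomp.exists_isMaxOn ⟨0, hzero⟩ hcont.continuousOn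
  have hxF : IsFeasibleFlow E u x s t := hxK
  set S : Finset V := Finset.univ.filter
    (fun v => Relation.ReflTransGen (resStep E u x) s v) with hS
  have hsS : s ∈ S := Finset.mem_filter.mpr ⟨Finset.mem_univ s, Relation.ReflTransGen.refl⟩
  have htS : t ∉ S := by
    intro htmem
    have hreach := (Finset.mem_filter.mp htmem).2
    obtain ⟨c, hc0, hcdiv, ε, hε, hfe⟩ := exists_aug hxF.1 hreach
    set y : V × V → ℝ := fun e => x e + ε * c e with hy
    have hyK : IsFeasibleFlow E u y s t := by
      refine ⟨fun e he => hfe ε hε le_rfl e he, fun e he => by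
        simp [hy, hxF.2.1 e he, hc0 e he], ?_⟩
      intro v hvs hvt
      have h1 : netOut E y v = 0 := by
        rw [hy, netOut_add_smul, netOut_eq_zero hxF hvs hvt, hcdiv v,
          if_neg hvs, if_neg hvt]
        ring
      have := h1
      unfold netOut at this
      linarith
    have hval : flowValueFrom E y s = flowValueFrom E x s + ε := by
      have : netOut E y s = netOut E x s + ε * ((if s = s then (1:ℝ) else 0)
          - (if s = t then 1 else 0)) := by
        rw [hy, netOut_add_smul, hcdiv s]
      rw [if_pos rfl, if_neg hst] at this
      simpa [flowValueFrom, netOut] using this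
    have := hxmax hyK
    simp only [Set.mem_setOf_eq] at this
    rw [hval] at this
    linarith
  have hsat : ∀ e ∈ cutArcs E S, x e = u e := by
    intro e he
    obtain ⟨heE, h1, h2⟩ := Finset.mem_filter.mp he
    by_contra hne
    have hlt : x e < u e := lt_of_le_of_ne (hxF.1 e heE).2 hne
    have hstep : resStep E u x e.1 e.2 := Or.inl ⟨by rwa [Prod.mk.eta], by rwa [Prod.mk.eta]⟩
    exact h2 (Finset.mem_filter.mpr ⟨Finset.mem_univ _,
      Relation.ReflTransGen.tail (Finset.mem_filter.mp h1).2 hstep⟩)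
  have hback : ∀ e ∈ backArcs E S, x e = 0 := by
    intro e he
    obtain ⟨heE, h1, h2⟩ := Finset.mem_filter.mp he
    by_contra hne
    have hpos : 0 < x e := lt_of_le_of_ne (hxF.1 e heE).1 (Ne.symm hne)
    have hstep : resStep E u x e.2 e.1 := Or.inr ⟨by rwa [Prod.mk.eta], by rwa [Prod.mk.eta]⟩
    exact h1 (Finset.mem_filter.mpr ⟨Finset.mem_univ _,
      Relation.ReflTransGen.tail (Finset.mem_filter.mp h2).2 hstep⟩)
  have hFeq : flowValueFrom E x s = cutCapacity E u S := by
    rw [value_eq_cut_sub_back hxF hsS htS, Finset.sum_congr rfl hsat,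
      Finset.sum_eq_zero hback]
    simp [cutCapacity]
  refine ⟨flowValueFrom E x s, ⟨⟨x, hxF, rfl⟩, ?_⟩, ⟨⟨S, hsS, htS, hFeq.symm⟩, ?_⟩⟩
  · rintro v ⟨y, hyK, rfl⟩
    exact le_trans (value_le_cutCapacity hyK hu hsS htS) (le_of_eq hFeq.symm)
  · rintro cv ⟨S', hs', ht', rfl⟩
    exact value_le_cutCapacity hxF hu hs' ht'
end

section
/- (Edge version of Menger's theorem.) In a finite directed graph G with distinct vertices s and t, the maximum number of pairwise arc-disjoint directed paths from s to t equals the minimum number of arcs whose removal leaves no directed path from s to t. -/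
open Finset

variable {V : Type*}

/-- The list of consecutive arcs along a list of vertices. -/
def pathArcs (p : List V) : List (V × V) := p.zip p.tail

/-- A directed s→t path in the arc set `E`, given as its list of vertices. -/
def IsDirPath [DecidableEq V] (E : Finset (V × V)) (s t : V) (p : List V) : Prop :=
  p.head? = some s ∧ p.getLast? = some t ∧ ∀ a ∈ pathArcs p, a ∈ E


namespace MAux


theorem pathArcs_nil : pathArcs ([] : List V) = [] := rfl
theorem pathArcs_single (a : V) : pathArcs [a] = [] := rfl
theorem pathArcs_cons_cons (a b : V) (r : List V) :
    pathArcs (a :: b :: r) = (a, b) :: pathArcs (b :: r) := rfl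

theorem mem_fst_of_mem_pathArcs {e : V × V} : ∀ {p : List V}, e ∈ pathArcs p → e.1 ∈ p ∧ e.2 ∈ p
  | [], h => by simp [pathArcs_nil] at h
  | [a], h => by simp [pathArcs_single] at h
  | a :: b :: r, h => by
      rw [pathArcs_cons_cons] at h
      rcases List.mem_cons.1 h with h | h
      · subst h; exact ⟨List.mem_cons_self, List.mem_cons_of_mem _ (List.mem_cons_self)⟩
      · have := mem_fst_of_mem_pathArcs h
        exact ⟨List.mem_cons_of_mem _ this.1, List.mem_cons_of_mem _ this.2⟩

theorem pathArcs_suffix : ∀ (u q : List V), pathArcs q <:+ pathArcs (u ++ q)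
  | [], q => by simp
  | a :: u', q => by
      have h := pathArcs_suffix u' q
      cases hq : u' ++ q with
      | nil =>
          rw [hq] at h
          have hq' : q = [] := List.append_eq_nil_iff.1 hq |>.2
          subst hq'
          exact List.nil_suffix
      | cons b r =>
          have : pathArcs (a :: u' ++ q) = (a, b) :: pathArcs (u' ++ q) := by
            simp only [List.cons_append, hq, pathArcs_cons_cons]
          rw [List.cons_append, hq] at this ⊢
          rw [this]
          exact (hq ▸ h).trans (List.suffix_cons _ _)

theorem pathArcs_concat : ∀ (p : List V) (u v : V), p.getLast? = some u →
    pathArcs (p ++ [v]) = pathArcs p ++ [(u, v)]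
  | [], u, v, h => by simp at h
  | [a], u, v, h => by simp at h; subst h; rfl
  | a :: b :: r, u, v, h => by
      have hl : (b :: r).getLast? = some u := by
        rw [List.getLast?_cons_cons] at h; exact h
      have := pathArcs_concat (b :: r) u v hl
      simp only [List.cons_append, pathArcs_cons_cons] at *
      rw [this]


section
variable [DecidableEq V]

theorem getLast?_cons_of_ne_nil {a : V} {l : List V} (hl : l ≠ []) :
    (a :: l).getLast? = l.getLast? := by
  have := List.getLast?_append_of_ne_nil [a] (l₂ := l) hl
  simpa using this

theorem getLast?_suffix {q p : List V} (h : q <:+ p) (hq : q ≠ []) :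
    q.getLast? = p.getLast? := by
  obtain ⟨u, rfl⟩ := h
  exact (List.getLast?_append_of_ne_nil u hq).symm


theorem exists_nodup_path_aux (X : Finset (V × V)) (t : V) :
    ∀ (n : ℕ) (p : List V), p.length ≤ n → ∀ s, IsDirPath X s t p →
      ∃ q, IsDirPath X s t q ∧ q.Nodup ∧ ∀ v ∈ q, v ∈ p := by
  intro n
  induction n with
  | zero =>
    intro p hlen s hp
    have : p = [] := List.length_eq_zero_iff.1 (Nat.le_zero.1 hlen)
    subst this; simp [IsDirPath] at hp
  | succ n IH =>
    rintro p hlen s ⟨h1, h2, h3⟩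
    cases p with
    | nil => simp at h1
    | cons a rest =>
    obtain rfl : s = a := by simpa using h1.symm
    have hsr : ∀ v ∈ rest, v ∈ s :: rest := fun v hv => List.mem_cons_of_mem _ hv
    by_cases hmem : s ∈ rest
    · -- jump to the last occurrence structure: use drop at indexOf
      have hilt : rest.idxOf s < rest.length := List.idxOf_lt_length_iff.2 hmem
      set q : List V := rest.drop (rest.idxOf s) with hqdef
      have hdrop : q = s :: rest.drop (rest.idxOf s + 1) := by
        rw [hqdef, List.drop_eq_getElem_cons hilt, List.getElem_idxOf hilt]
      have hqne : q ≠ [] := by rw [hdrop]; simp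
      have hsuf : q <:+ rest := List.drop_suffix _ rest
      have hrestne : rest ≠ [] := by rintro rfl; simp at hmem
      have hql : q.getLast? = some t := by
        rw [getLast?_suffix hsuf hqne, ← getLast?_cons_of_ne_nil (a := s) hrestne]; exact h2
      have hqh : q.head? = some s := by rw [hdrop]; rfl
      have harcs : ∀ a ∈ pathArcs q, a ∈ X := by
        intro a ha
        apply h3
        obtain ⟨u, hu⟩ := hsuf
        have s1 : pathArcs q <:+ pathArcs rest := hu ▸ pathArcs_suffix u q
        have s2 : pathArcs rest <:+ pathArcs (s :: rest) := pathArcs_suffix [s] rest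
        exact s2.subset (s1.subset ha)
      have hlq : q.length ≤ n := by
        have := List.length_drop (i := rest.idxOf s) (l := rest)
        simp only [← hqdef] at this
        simp only [List.length_cons] at hlen
        omega
      obtain ⟨q', hq'⟩ := IH q hlq s ⟨hqh, hql, harcs⟩
      exact ⟨q', hq'.1, hq'.2.1, fun v hv => hsr v (hsuf.subset (hq'.2.2 v hv))⟩
    · cases rest with
      | nil => exact ⟨[s], ⟨rfl, h2, by simp [pathArcs_single]⟩, by simp, by simp⟩
      | cons b r =>
        have hrl : (b :: r).getLast? = some t := by
          rw [← getLast?_cons_of_ne_nil (a := s) (by simp)]; exact h2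
        have harcs : ∀ a ∈ pathArcs (b :: r), a ∈ X := by
          intro a ha
          exact h3 a ((pathArcs_suffix [s] (b :: r)).subset ha)
        have hlb : (b :: r).length ≤ n := by simp only [List.length_cons] at hlen ⊢; omega
        obtain ⟨q', ⟨hq1, hq2, hq3⟩, hnd, hmem'⟩ := IH (b :: r) hlb b ⟨rfl, hrl, harcs⟩
        cases q' with
        | nil => simp at hq1
        | cons b' q'' =>
        obtain rfl : b = b' := by simpa using hq1.symm
        refine ⟨s :: b :: q'', ⟨rfl, ?_, ?_⟩, ?_, ?_⟩
        · rw [getLast?_cons_of_ne_nil (by simp)]; exact hq2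
        · intro a ha
          rw [pathArcs_cons_cons] at ha
          rcases List.mem_cons.1 ha with h | h
          · subst h
            exact h3 (s, b) (by rw [pathArcs_cons_cons]; exact List.mem_cons_self)
          · exact hq3 a h
        · refine List.nodup_cons.2 ⟨?_, hnd⟩
          intro hs
          exact hmem (hmem' s hs)
        · intro v hv
          rcases List.mem_cons.1 hv with h | h
          · subst h; exact List.mem_cons_self
          · exact hsr v (hmem' v h)

theorem IsDirPath_mono {X Y : Finset (V × V)} (hXY : X ⊆ Y) {s t : V} {p : List V}
    (h : IsDirPath X s t p) : IsDirPath Y s t p :=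
  ⟨h.1, h.2.1, fun a ha => hXY (h.2.2 a ha)⟩

inductive Reach (X : Finset (V × V)) (s : V) : V → Prop
  | refl : Reach X s s
  | step {u v : V} : Reach X s u → (u, v) ∈ X → Reach X s v

theorem Reach.exists_path {X : Finset (V × V)} {s v : V} (h : Reach X s v) :
    ∃ p, IsDirPath X s v p := by
  induction h with
  | refl => exact ⟨[s], rfl, rfl, by simp [pathArcs_single]⟩
  | @step u v hr he IH =>
    obtain ⟨p, h1, h2, h3⟩ := IH
    have hpne : p ≠ [] := by rintro rfl; simp at h1
    refine ⟨p ++ [v], ?_, List.getLast?_concat, ?_⟩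
    · rw [List.head?_append, h1]; rfl
    · rw [pathArcs_concat p u v h2]
      intro a ha
      rcases List.mem_append.1 ha with h | h
      · exact h3 a h
      · simpa using (List.mem_singleton.1 h) ▸ he


/-- Crossing lemma. -/
theorem exists_crossing_arc (S : Finset V) :
    ∀ (p : List V) (a b : V), p.head? = some a → p.getLast? = some b →
      a ∈ S → b ∉ S → ∃ e ∈ pathArcs p, e.1 ∈ S ∧ e.2 ∉ S := by
  intro p
  induction p with
  | nil => intro a b h1; simp at h1
  | cons x rest IH =>
    intro a b h1 h2 haS hbS
    obtain rfl : a = x := by simpa using h1.symm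
    cases rest with
    | nil =>
      obtain rfl : a = b := by simpa using h2
      exact absurd haS hbS
    | cons y r =>
      by_cases hy : y ∈ S
      · have h2' : (y :: r).getLast? = some b := by
          rw [List.getLast?_cons_cons] at h2; exact h2
        obtain ⟨e, he, hp⟩ := IH y b rfl h2' hy hbS
        exact ⟨e, by rw [pathArcs_cons_cons]; exact List.mem_cons_of_mem _ he, hp⟩
      · exact ⟨(a, y), by rw [pathArcs_cons_cons]; exact List.mem_cons_self, haS, hy⟩

theorem no_path_empty {s t : V} (hst : s ≠ t) (p : List V) :
    ¬ IsDirPath (∅ : Finset (V × V)) s t p := by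
  rintro ⟨h1, h2, h3⟩
  cases p with
  | nil => simp at h1
  | cons x rest =>
    obtain rfl : s = x := by simpa using h1.symm
    cases rest with
    | nil => exact hst (by simpa using h2)
    | cons y r =>
      exact absurd (h3 (s, y) (by rw [pathArcs_cons_cons]; exact List.mem_cons_self)) (by simp)


def outC (X : Finset (V × V)) (v : V) : ℕ := (X.filter (fun e => e.1 = v)).card
def inC (X : Finset (V × V)) (v : V) : ℕ := (X.filter (fun e => e.2 = v)).card

def fval (X : Finset (V × V)) (s : V) : ℤ := (outC X s : ℤ) - inC X s

def Conserves (X : Finset (V × V)) (s t : V) : Prop :=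
  ∀ v, v ≠ s → v ≠ t → inC X v = outC X v

theorem sum_outC (X : Finset (V × V)) (S : Finset V) :
    ∑ v ∈ S, outC X v = (X.filter (fun e => e.1 ∈ S)).card := by
  have hbi : X.filter (fun e => e.1 ∈ S) = S.biUnion (fun v => X.filter (fun e => e.1 = v)) := by
    ext e
    simp only [mem_filter, mem_biUnion]
    constructor
    · rintro ⟨he, hs⟩; exact ⟨e.1, hs, he, rfl⟩
    · rintro ⟨v, hv, he, rfl⟩; exact ⟨he, hv⟩
  rw [hbi, card_biUnion]
  · rfl
  · intro x hx y hy hxy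
    simp only [disjoint_left, mem_filter]
    rintro e ⟨_, rfl⟩ ⟨_, h⟩
    exact hxy h

theorem sum_inC (X : Finset (V × V)) (S : Finset V) :
    ∑ v ∈ S, inC X v = (X.filter (fun e => e.2 ∈ S)).card := by
  have hbi : X.filter (fun e => e.2 ∈ S) = S.biUnion (fun v => X.filter (fun e => e.2 = v)) := by
    ext e
    simp only [mem_filter, mem_biUnion]
    constructor
    · rintro ⟨he, hs⟩; exact ⟨e.2, hs, he, rfl⟩
    · rintro ⟨v, hv, he, rfl⟩; exact ⟨he, hv⟩
  rw [hbi, card_biUnion]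
  · rfl
  · intro x hx y hy hxy
    simp only [disjoint_left, mem_filter]
    rintro e ⟨_, rfl⟩ ⟨_, h⟩
    exact hxy h

theorem cut_counting (X : Finset (V × V)) (S : Finset V) :
    (∑ v ∈ S, (outC X v : ℤ)) - ∑ v ∈ S, (inC X v : ℤ) =
      ((X.filter (fun e => e.1 ∈ S ∧ e.2 ∉ S)).card : ℤ) -
        (X.filter (fun e => e.1 ∉ S ∧ e.2 ∈ S)).card := by
  have h1 : ((X.filter (fun e => e.1 ∈ S)).filter (fun e => e.2 ∈ S)).card
      + ((X.filter (fun e => e.1 ∈ S)).filter (fun e => ¬ e.2 ∈ S)).card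
      = (X.filter (fun e => e.1 ∈ S)).card :=
    card_filter_add_card_filter_not _
  have h2 : ((X.filter (fun e => e.2 ∈ S)).filter (fun e => e.1 ∈ S)).card
      + ((X.filter (fun e => e.2 ∈ S)).filter (fun e => ¬ e.1 ∈ S)).card
      = (X.filter (fun e => e.2 ∈ S)).card :=
    card_filter_add_card_filter_not _
  have e1 : (X.filter (fun e => e.1 ∈ S)).filter (fun e => e.2 ∈ S)
      = (X.filter (fun e => e.2 ∈ S)).filter (fun e => e.1 ∈ S) := by
    rw [filter_filter, filter_filter]; apply filter_congr; intro e _; tauto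
  have e2 : (X.filter (fun e => e.1 ∈ S)).filter (fun e => ¬ e.2 ∈ S)
      = X.filter (fun e => e.1 ∈ S ∧ e.2 ∉ S) := by rw [filter_filter]
  have e3 : (X.filter (fun e => e.2 ∈ S)).filter (fun e => ¬ e.1 ∈ S)
      = X.filter (fun e => e.1 ∉ S ∧ e.2 ∈ S) := by
    rw [filter_filter]; apply filter_congr; intro e _; tauto
  rw [← Nat.cast_sum, ← Nat.cast_sum, sum_outC, sum_inC, ← h1, ← h2, e1, e2, e3]
  push_cast
  ring

theorem flow_across_cut {X : Finset (V × V)} {s t : V} (hc : Conserves X s t)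
    {S : Finset V} (hs : s ∈ S) (ht : t ∉ S) :
    fval X s = ((X.filter (fun e => e.1 ∈ S ∧ e.2 ∉ S)).card : ℤ)
      - (X.filter (fun e => e.1 ∉ S ∧ e.2 ∈ S)).card := by
  rw [← cut_counting, ← Finset.sum_sub_distrib]
  rw [Finset.sum_eq_single_of_mem s hs]
  · rfl
  · intro v hv hvs
    have hvt : v ≠ t := by rintro rfl; exact ht hv
    rw [hc v hvs hvt]; ring


theorem mem_of_getLast?' {l : List V} {a : V} (h : l.getLast? = some a) : a ∈ l := by
  cases l with
  | nil => simp at h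
  | cons x xs =>
    rw [List.getLast?_eq_getLast (l := x :: xs) (by simp)] at h
    have := List.getLast_mem (l := x :: xs) (by simp)
    rwa [← Option.some_injective _ h]

theorem outC_pathArcs : ∀ (p : List V) (s t v : V), p.Nodup → p.head? = some s →
    p.getLast? = some t →
    outC (pathArcs p).toFinset v = if v ∈ p ∧ v ≠ t then 1 else 0 := by
  intro p
  induction p with
  | nil => intro s t v _ h1; simp at h1
  | cons a rest IH =>
    intro s t v hnd h1 h2
    obtain rfl : s = a := by simpa using h1.symm
    cases rest with
    | nil =>
      obtain rfl : t = s := by simpa using h2.symm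
      simp [pathArcs_single, outC]
    | cons b r =>
      have hnd' : (b :: r).Nodup := (List.nodup_cons.1 hnd).2
      have hans : s ∉ b :: r := (List.nodup_cons.1 hnd).1
      have h2' : (b :: r).getLast? = some t := by
        rw [List.getLast?_cons_cons] at h2; exact h2
      have ht : t ∈ b :: r := mem_of_getLast?' h2'
      have hIH := IH b t v hnd' rfl h2'
      have hfin : (pathArcs (s :: b :: r)).toFinset
          = insert (s, b) (pathArcs (b :: r)).toFinset := by
        rw [pathArcs_cons_cons]; simp
      rw [hfin]
      unfold outC at *
      rw [filter_insert]
      by_cases hv : v = s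
      · subst hv
        have hz : ((pathArcs (b :: r)).toFinset.filter (fun e => e.1 = v)).card = 0 := by
          rw [hIH, if_neg]; rintro ⟨h, -⟩; exact hans h
        rw [if_pos rfl]
        rw [Finset.card_eq_zero] at hz
        rw [hz]
        simp only [insert_empty_eq, card_singleton]
        rw [if_pos ⟨List.mem_cons_self, fun h => hans (h ▸ ht)⟩]
      · rw [if_neg (by simpa using Ne.symm hv), hIH]
        congr 1
        simp only [List.mem_cons, eq_iff_iff]
        tauto

theorem inC_pathArcs : ∀ (p : List V) (s t v : V), p.Nodup → p.head? = some s →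
    p.getLast? = some t →
    inC (pathArcs p).toFinset v = if v ∈ p ∧ v ≠ s then 1 else 0 := by
  intro p
  induction p with
  | nil => intro s t v _ h1; simp at h1
  | cons a rest IH =>
    intro s t v hnd h1 h2
    obtain rfl : s = a := by simpa using h1.symm
    cases rest with
    | nil => simp [pathArcs_single, inC]
    | cons b r =>
      have hnd' : (b :: r).Nodup := (List.nodup_cons.1 hnd).2
      have hans : s ∉ b :: r := (List.nodup_cons.1 hnd).1
      have h2' : (b :: r).getLast? = some t := by
        rw [List.getLast?_cons_cons] at h2; exact h2
      have hIH := IH b t v hnd' rfl h2'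
      have hfin : (pathArcs (s :: b :: r)).toFinset
          = insert (s, b) (pathArcs (b :: r)).toFinset := by
        rw [pathArcs_cons_cons]; simp
      rw [hfin]
      unfold inC at *
      rw [filter_insert]
      by_cases hvb : v = b
      · have hz : ((pathArcs (b :: r)).toFinset.filter (fun e => e.2 = v)).card = 0 := by
          rw [hIH, if_neg]; rintro ⟨-, h⟩; exact h hvb
        rw [if_pos hvb.symm]
        rw [Finset.card_eq_zero] at hz
        rw [hz]
        simp only [insert_empty_eq, card_singleton]
        have hvs : v ≠ s := by rintro rfl; exact hans (hvb ▸ List.mem_cons_self)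
        rw [if_pos ⟨List.mem_cons_of_mem _ (hvb ▸ List.mem_cons_self), hvs⟩]
      · rw [if_neg (by simpa using Ne.symm hvb), hIH]
        congr 1
        simp only [List.mem_cons, eq_iff_iff]
        have hvs' : v ∈ r → v ≠ s := by
          intro h hvs; exact hans (hvs ▸ List.mem_cons_of_mem _ h)
        tauto

theorem card_filter_aug {B X Fw : Finset (V × V)} (hB : B ⊆ X) (hF : Disjoint Fw X)
    (q : V × V → Prop) [DecidablePred q] :
    (((X \ B) ∪ Fw).filter q).card + (B.filter q).card
      = (X.filter q).card + (Fw.filter q).card := by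
  have h1 : (X \ B).filter q = X.filter q \ B.filter q := by
    ext e; simp only [mem_filter, mem_sdiff]; tauto
  have h2 : Disjoint ((X \ B).filter q) (Fw.filter q) := by
    refine Disjoint.mono (filter_subset _ _) (filter_subset _ _) ?_
    exact Disjoint.mono_left (sdiff_subset) hF.symm
  rw [filter_union, card_union_of_disjoint h2, h1,
    add_right_comm, card_sdiff_add_card_eq_card (filter_subset_filter _ hB)]


theorem pathArcs_diff (p : List V) {s t : V} (hst : s ≠ t) (hnd : p.Nodup)
    (h1 : p.head? = some s) (h2 : p.getLast? = some t) (v : V) :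
    (outC (pathArcs p).toFinset v : ℤ) - inC (pathArcs p).toFinset v
      = (if v = s then 1 else 0) - (if v = t then 1 else 0) := by
  rw [outC_pathArcs p s t v hnd h1 h2, inC_pathArcs p s t v hnd h1 h2]
  have hsp : s ∈ p := by cases p with
    | nil => simp at h1
    | cons a r => exact (by simpa using h1.symm : s = a) ▸ List.mem_cons_self
  have htp : t ∈ p := mem_of_getLast?' h2
  by_cases hvs : v = s
  · subst hvs
    rw [if_pos ⟨hsp, hst⟩, if_neg (by rintro ⟨-, h⟩; exact h rfl), if_pos rfl,
      if_neg hst]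
    norm_num
  · by_cases hvt : v = t
    · subst hvt
      rw [if_neg (by rintro ⟨-, h⟩; exact h rfl), if_pos ⟨htp, Ne.symm hst⟩,
        if_neg hvs, if_pos rfl]
      norm_num
    · rw [if_neg hvs, if_neg hvt]
      by_cases hvp : v ∈ p
      · rw [if_pos ⟨hvp, hvt⟩, if_pos ⟨hvp, hvs⟩]; ring
      · rw [if_neg (by tauto), if_neg (by tauto)]; ring

theorem card_filter_sdiff {B X : Finset (V × V)} (hB : B ⊆ X)
    (q : V × V → Prop) [DecidablePred q] :
    ((X \ B).filter q).card + (B.filter q).card = (X.filter q).card := by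
  have := card_filter_aug (Fw := ∅) hB (disjoint_empty_left X) q
  simpa using this

theorem remove_path {X : Finset (V × V)} {s t : V} (hst : s ≠ t)
    (hc : Conserves X s t) {p : List V} (hp : IsDirPath X s t p) (hnd : p.Nodup) :
    Conserves (X \ (pathArcs p).toFinset) s t ∧
      fval (X \ (pathArcs p).toFinset) s = fval X s - 1 := by
  obtain ⟨h1, h2, h3⟩ := hp
  set F := (pathArcs p).toFinset with hF
  have hFX : F ⊆ X := by intro a ha; exact h3 a (List.mem_toFinset.1 ha)
  have hout : ∀ v, outC (X \ F) v + outC F v = outC X v := fun v =>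
    card_filter_sdiff hFX (fun e => e.1 = v)
  have hin : ∀ v, inC (X \ F) v + inC F v = inC X v := fun v =>
    card_filter_sdiff hFX (fun e => e.2 = v)
  have hdiff := pathArcs_diff p hst hnd h1 h2
  rw [← hF] at hdiff
  constructor
  · intro v hvs hvt
    have d := hdiff v
    rw [if_neg hvs, if_neg hvt] at d
    have hcv := hc v hvs hvt
    have o := hout v; have i := hin v
    have : (inC (X \ F) v : ℤ) = outC (X \ F) v := by
      have o' : (outC (X \ F) v : ℤ) + outC F v = outC X v := by exact_mod_cast o
      have i' : (inC (X \ F) v : ℤ) + inC F v = inC X v := by exact_mod_cast i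
      have hcv' : (inC X v : ℤ) = outC X v := by exact_mod_cast hcv
      omega
    exact_mod_cast this
  · have d := hdiff s
    rw [if_pos rfl, if_neg hst] at d
    have o := hout s; have i := hin s
    unfold fval
    have o' : (outC (X \ F) s : ℤ) + outC F s = outC X s := by exact_mod_cast o
    have i' : (inC (X \ F) s : ℤ) + inC F s = inC X s := by exact_mod_cast i
    omega

theorem flow_decomposition {s t : V} (hst : s ≠ t) [Fintype V] :
    ∀ (m : ℕ) (X : Finset (V × V)), Conserves X s t → fval X s = m →
      ∃ P : Fin m → List V, (∀ i, IsDirPath X s t (P i)) ∧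
        (∀ i j, i ≠ j → ∀ a ∈ pathArcs (P i), a ∉ pathArcs (P j)) := by
  intro m
  induction m with
  | zero => exact fun X _ _ => ⟨Fin.elim0, fun i => i.elim0, fun i => i.elim0⟩
  | succ m IH =>
    intro X hc hv
    classical
    set S : Finset V := Finset.univ.filter (fun v => Reach X s v) with hS
    have hsS : s ∈ S := by simp [hS, Reach.refl]
    have htS : t ∈ S := by
      by_contra htS
      have hcut : X.filter (fun e => e.1 ∈ S ∧ e.2 ∉ S) = ∅ := by
        rw [Finset.filter_eq_empty_iff]
        rintro e he ⟨h1, h2⟩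
        refine h2 ?_
        simp only [hS, mem_filter, mem_univ, true_and] at h1 ⊢
        exact h1.step (by rwa [Prod.mk.eta])
      have := flow_across_cut hc hsS htS
      rw [hcut, hv] at this
      simp at this
      omega
    have hreach : Reach X s t := by simpa [hS] using htS
    obtain ⟨p0, hp0⟩ := hreach.exists_path
    obtain ⟨p, hp, hnd, -⟩ := exists_nodup_path_aux X t p0.length p0 le_rfl s hp0
    obtain ⟨hc', hv'⟩ := remove_path hst hc hp hnd
    have hv'' : fval (X \ (pathArcs p).toFinset) s = m := by rw [hv', hv]; push_cast; ring
    obtain ⟨P', hP'path, hP'disj⟩ := IH _ hc' hv''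
    refine ⟨Fin.cons p P', ?_, ?_⟩
    · intro i
      induction i using Fin.cases with
      | zero => rw [Fin.cons_zero]; exact hp
      | succ i =>
        rw [Fin.cons_succ]
        exact IsDirPath_mono (sdiff_subset) (hP'path i)
    · have key : ∀ i a, a ∈ pathArcs (P' i) → a ∉ pathArcs p := by
        intro i a ha hap
        have := (hP'path i).2.2 a ha
        rw [Finset.mem_sdiff] at this
        exact this.2 (List.mem_toFinset.2 hap)
      intro i j hij
      induction i using Fin.cases with
      | zero =>
        induction j using Fin.cases with
        | zero => exact absurd rfl hij
        | succ j =>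
          rw [Fin.cons_zero, Fin.cons_succ]
          intro a ha haj
          exact key j a haj ha
      | succ i =>
        induction j using Fin.cases with
        | zero =>
          rw [Fin.cons_zero, Fin.cons_succ]
          intro a ha
          exact key i a ha
        | succ j =>
          rw [Fin.cons_succ, Fin.cons_succ]
          exact hP'disj i j (fun h => hij (by rw [h]))

theorem outC_swap (A : Finset (V × V)) (v : V) :
    outC (A.image (fun a => (a.2, a.1))) v = inC A v := by
  unfold outC inC
  have h : (A.image (fun a => (a.2, a.1))).filter (fun e => e.1 = v)
      = (A.filter (fun e => e.2 = v)).image (fun a => (a.2, a.1)) := by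
    ext e
    simp only [mem_filter, mem_image]
    constructor
    · rintro ⟨⟨a, ha, rfl⟩, hv⟩; exact ⟨a, ⟨ha, hv⟩, rfl⟩
    · rintro ⟨a, ⟨ha, hv⟩, rfl⟩; exact ⟨⟨a, ha, rfl⟩, hv⟩
  rw [h, Finset.card_image_of_injective _ (fun a b h => ?_)]
  have := congrArg Prod.fst h; have := congrArg Prod.snd h
  exact Prod.ext (by simpa using congrArg Prod.snd h) (by simpa using congrArg Prod.fst h)

theorem inC_swap (A : Finset (V × V)) (v : V) :
    inC (A.image (fun a => (a.2, a.1))) v = outC A v := by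
  unfold outC inC
  have h : (A.image (fun a => (a.2, a.1))).filter (fun e => e.2 = v)
      = (A.filter (fun e => e.1 = v)).image (fun a => (a.2, a.1)) := by
    ext e
    simp only [mem_filter, mem_image]
    constructor
    · rintro ⟨⟨a, ha, rfl⟩, hv⟩; exact ⟨a, ⟨ha, hv⟩, rfl⟩
    · rintro ⟨a, ⟨ha, hv⟩, rfl⟩; exact ⟨⟨a, ha, rfl⟩, hv⟩
  rw [h, Finset.card_image_of_injective _ (fun a b h => ?_)]
  exact Prod.ext (by simpa using congrArg Prod.snd h) (by simpa using congrArg Prod.fst h)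

theorem augment {E X : Finset (V × V)} {s t : V} (hst : s ≠ t) (hXE : X ⊆ E)
    (hc : Conserves X s t) {p : List V} (hnd : p.Nodup)
    (hp : IsDirPath ((E \ X) ∪ X.image (fun e => (e.2, e.1))) s t p) :
    ∃ X', X' ⊆ E ∧ Conserves X' s t ∧ fval X' s = fval X s + 1 := by
  obtain ⟨h1, h2, h3⟩ := hp
  set F := (pathArcs p).toFinset with hFdef
  set Fw := F.filter (fun a => a ∈ E ∧ a ∉ X) with hFw
  set Bw' := F \ Fw with hBw'
  set Bw := Bw'.image (fun a => (a.2, a.1)) with hBw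
  have hBwX : Bw ⊆ X := by
    intro b hb
    rw [hBw] at hb
    obtain ⟨a, ha, rfl⟩ := Finset.mem_image.1 hb
    rw [hBw', Finset.mem_sdiff] at ha
    obtain ⟨haF, haFw⟩ := ha
    have haR := h3 a (List.mem_toFinset.1 haF)
    rcases Finset.mem_union.1 haR with h | h
    · rw [Finset.mem_sdiff] at h
      exact absurd (Finset.mem_filter.2 ⟨haF, h.1, h.2⟩) haFw
    · obtain ⟨e, he, hea⟩ := Finset.mem_image.1 h
      have : (a.2, a.1) = e := by
        rw [← hea]
      rw [this]; exact he
  have hFwX : Disjoint Fw X := by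
    rw [Finset.disjoint_left]
    intro a ha
    exact (Finset.mem_filter.1 ha).2.2
  set X' := (X \ Bw) ∪ Fw with hX'
  have hX'E : X' ⊆ E := by
    intro a ha
    rcases Finset.mem_union.1 ha with h | h
    · exact hXE (Finset.mem_sdiff.1 h).1
    · exact (Finset.mem_filter.1 h).2.1
  -- partition counts
  have hpart : ∀ q : V × V → Prop, ∀ inst : DecidablePred q,
      (Fw.filter q).card + (Bw'.filter q).card = (F.filter q).card := by
    intro q inst
    have hsub : Fw ⊆ F := Finset.filter_subset _ _
    have hdisj : Disjoint (Fw.filter q) (Bw'.filter q) :=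
      Disjoint.mono (filter_subset _ _) (filter_subset _ _) Finset.disjoint_sdiff
    rw [← card_union_of_disjoint hdisj, ← filter_union]
    congr 2
    rw [hBw', Finset.union_sdiff_of_subset hsub]
  have keyO : ∀ v, (outC X' v : ℤ) = outC X v + outC Fw v - inC Bw' v := by
    intro v
    have := card_filter_aug hBwX hFwX (fun e => e.1 = v)
    have hsw : outC Bw v = inC Bw' v := by rw [hBw]; exact outC_swap _ v
    rw [← hX'] at this
    have : (outC X' v : ℤ) + outC Bw v = outC X v + outC Fw v := by exact_mod_cast this
    omega
  have keyI : ∀ v, (inC X' v : ℤ) = inC X v + inC Fw v - outC Bw' v := by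
    intro v
    have := card_filter_aug hBwX hFwX (fun e => e.2 = v)
    have hsw : inC Bw v = outC Bw' v := by rw [hBw]; exact inC_swap _ v
    rw [← hX'] at this
    have : (inC X' v : ℤ) + inC Bw v = inC X v + inC Fw v := by exact_mod_cast this
    omega
  have keyD : ∀ v, (outC X' v : ℤ) - inC X' v
      = ((outC X v : ℤ) - inC X v) + ((if v = s then 1 else 0) - (if v = t then 1 else 0)) := by
    intro v
    have hD := pathArcs_diff p hst hnd h1 h2 v
    rw [← hFdef] at hD
    have p1 := hpart (fun e => e.1 = v) inferInstance
    have p2 := hpart (fun e => e.2 = v) inferInstance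
    have p1' : (outC Fw v : ℤ) + outC Bw' v = outC F v := by exact_mod_cast p1
    have p2' : (inC Fw v : ℤ) + inC Bw' v = inC F v := by exact_mod_cast p2
    rw [keyO v, keyI v]
    omega
  refine ⟨X', hX'E, ?_, ?_⟩
  · intro v hvs hvt
    have := keyD v
    rw [if_neg hvs, if_neg hvt] at this
    have hcv : (inC X v : ℤ) = outC X v := by exact_mod_cast hc v hvs hvt
    have : (inC X' v : ℤ) = outC X' v := by omega
    exact_mod_cast this
  · have := keyD s
    rw [if_pos rfl, if_neg hst] at this
    unfold fval
    omega

theorem pack_le_cut {E F : Finset (V × V)} {s t : V}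
    {m : ℕ} (P : Fin m → List V) (hP : ∀ i, IsDirPath E s t (P i))
    (hdisj : ∀ i j, i ≠ j → ∀ a ∈ pathArcs (P i), a ∉ pathArcs (P j))
    (hF : ∀ p, ¬ IsDirPath (E \ F) s t p) : m ≤ F.card := by
  have hex : ∀ i, ∃ a, a ∈ pathArcs (P i) ∧ a ∈ F := by
    intro i
    by_contra h
    push_neg at h
    apply hF (P i)
    obtain ⟨h1, h2, h3⟩ := hP i
    exact ⟨h1, h2, fun a ha => Finset.mem_sdiff.2 ⟨h3 a ha, fun hf => h a ha hf⟩⟩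
  choose f hf1 hf2 using hex
  have hinj : Set.InjOn f (Finset.univ : Finset (Fin m)) := by
    intro i _ j _ hij
    by_contra hne
    exact hdisj i j hne _ (hf1 i) (hij ▸ hf1 j)
  have := Finset.card_le_card_of_injOn f (fun i _ => hf2 i) hinj
  simpa using this

end
end MAux

/-- Edge version of Menger's theorem: the maximum number of pairwise arc-disjoint directed
s→t paths equals the minimum number of arcs whose removal disconnects s from t. -/
theorem menger_edge_version [Fintype V] [DecidableEq V] (E : Finset (V × V))
    (s t : V) (hst : s ≠ t) :
    ∃ n : ℕ,
      IsGreatest {m : ℕ | ∃ P : Fin m → List V,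
        (∀ i, IsDirPath E s t (P i)) ∧
        (∀ i j, i ≠ j → ∀ a ∈ pathArcs (P i), a ∉ pathArcs (P j))} n ∧
      IsLeast {k : ℕ | ∃ F ⊆ E, F.card = k ∧
        ∀ p : List V, ¬ IsDirPath (E \ F) s t p} n := by
  classical
  open MAux in
  -- the set of cut sizes is nonempty
  have hEcut : E.card ∈ {k : ℕ | ∃ F ⊆ E, F.card = k ∧
      ∀ p : List V, ¬ IsDirPath (E \ F) s t p} := by
    refine ⟨E, Finset.Subset.refl E, rfl, ?_⟩
    intro p hp
    rw [Finset.sdiff_self] at hp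
    exact MAux.no_path_empty hst p hp
  set CutSet := {k : ℕ | ∃ F ⊆ E, F.card = k ∧
      ∀ p : List V, ¬ IsDirPath (E \ F) s t p} with hCutSet
  have hCutne : CutSet.Nonempty := ⟨E.card, hEcut⟩
  set n := sInf CutSet with hn
  have hleast : IsLeast CutSet n := ⟨Nat.sInf_mem hCutne, fun k hk => Nat.sInf_le hk⟩
  -- maximum flow
  set 𝒞 := E.powerset.filter (fun X => MAux.Conserves X s t) with h𝒞
  have hempty𝒞 : (∅ : Finset (V × V)) ∈ 𝒞 := by
    refine Finset.mem_filter.2 ⟨Finset.mem_powerset.2 (Finset.empty_subset E), ?_⟩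
    intro v _ _
    simp [MAux.inC, MAux.outC]
  obtain ⟨X, hX𝒞, hXmax⟩ := Finset.exists_max_image 𝒞 (fun X => MAux.fval X s) ⟨∅, hempty𝒞⟩
  have hXE : X ⊆ E := Finset.mem_powerset.1 (Finset.mem_filter.1 hX𝒞).1
  have hXc : MAux.Conserves X s t := (Finset.mem_filter.1 hX𝒞).2
  have hval0 : 0 ≤ MAux.fval X s := by
    have := hXmax ∅ hempty𝒞
    simpa [MAux.fval, MAux.inC, MAux.outC] using this
  set R := (E \ X) ∪ X.image (fun e => (e.2, e.1)) with hR
  set S := Finset.univ.filter (fun v => MAux.Reach R s v) with hS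
  have hsS : s ∈ S := by
    simp only [hS, Finset.mem_filter, Finset.mem_univ, true_and]
    exact MAux.Reach.refl
  have htS : t ∉ S := by
    intro htS
    have hreach : MAux.Reach R s t := by
      simpa only [hS, Finset.mem_filter, Finset.mem_univ, true_and] using htS
    obtain ⟨p0, hp0⟩ := hreach.exists_path
    obtain ⟨p, hp, hnd, -⟩ := MAux.exists_nodup_path_aux R t p0.length p0 le_rfl s hp0
    obtain ⟨X', hX'E, hX'c, hX'v⟩ := MAux.augment hst hXE hXc hnd hp
    have : MAux.fval X' s ≤ MAux.fval X s :=
      hXmax X' (Finset.mem_filter.2 ⟨Finset.mem_powerset.2 hX'E, hX'c⟩)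
    omega
  set F := E.filter (fun e => e.1 ∈ S ∧ e.2 ∉ S) with hF
  have hFX : F ⊆ X := by
    intro e he
    obtain ⟨heE, h1, h2⟩ := Finset.mem_filter.1 he
    by_contra heX
    apply h2
    have heR : e ∈ R := Finset.mem_union_left _ (Finset.mem_sdiff.2 ⟨heE, heX⟩)
    have h1' : MAux.Reach R s e.1 := by
      simpa only [hS, Finset.mem_filter, Finset.mem_univ, true_and] using h1
    simp only [hS, Finset.mem_filter, Finset.mem_univ, true_and]
    exact h1'.step (by rwa [Prod.mk.eta])
  have hXcut : X.filter (fun e => e.1 ∈ S ∧ e.2 ∉ S) = F := by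
    ext e
    simp only [hF, Finset.mem_filter]
    constructor
    · rintro ⟨heX, hcr⟩; exact ⟨hXE heX, hcr⟩
    · rintro ⟨heE, hcr⟩
      exact ⟨hFX (Finset.mem_filter.2 ⟨heE, hcr⟩), hcr⟩
  have hback : X.filter (fun e => e.1 ∉ S ∧ e.2 ∈ S) = ∅ := by
    rw [Finset.filter_eq_empty_iff]
    rintro e heX ⟨h1, h2⟩
    apply h1
    have h2' : MAux.Reach R s e.2 := by
      simpa only [hS, Finset.mem_filter, Finset.mem_univ, true_and] using h2
    have hsw : (e.2, e.1) ∈ R :=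
      Finset.mem_union_right _ (Finset.mem_image.2 ⟨e, heX, rfl⟩)
    simp only [hS, Finset.mem_filter, Finset.mem_univ, true_and]
    exact h2'.step hsw
  have hflow : MAux.fval X s = F.card := by
    have := MAux.flow_across_cut hXc hsS htS
    rw [hXcut, hback] at this
    simpa using this
  have hFcut : ∀ p : List V, ¬ IsDirPath (E \ F) s t p := by
    rintro p ⟨h1, h2, h3⟩
    obtain ⟨e, he, hcr1, hcr2⟩ := MAux.exists_crossing_arc S p s t h1 h2 hsS htS
    have he' := h3 e he
    rw [Finset.mem_sdiff] at he'
    exact he'.2 (Finset.mem_filter.2 ⟨he'.1, hcr1, hcr2⟩)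
  have hFE : F ⊆ E := Finset.filter_subset _ _
  have hFCutSet : F.card ∈ CutSet := ⟨F, hFE, rfl, hFcut⟩
  -- decomposition
  set m0 := (MAux.fval X s).toNat with hm0
  have hm0' : MAux.fval X s = (m0 : ℤ) := (Int.toNat_of_nonneg hval0).symm
  obtain ⟨P, hPpath, hPdisj⟩ := MAux.flow_decomposition hst m0 X hXc hm0'
  have hPackm0 : m0 ∈ {m : ℕ | ∃ P : Fin m → List V,
      (∀ i, IsDirPath E s t (P i)) ∧
      (∀ i j, i ≠ j → ∀ a ∈ pathArcs (P i), a ∉ pathArcs (P j))} :=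
    ⟨P, fun i => MAux.IsDirPath_mono hXE (hPpath i), hPdisj⟩
  have hm0F : m0 = F.card := by
    have := hflow
    rw [hm0'] at this
    exact_mod_cast this
  have hnm0 : n ≤ m0 := hm0F ▸ hleast.2 hFCutSet
  have hub : ∀ m ∈ {m : ℕ | ∃ P : Fin m → List V,
      (∀ i, IsDirPath E s t (P i)) ∧
      (∀ i j, i ≠ j → ∀ a ∈ pathArcs (P i), a ∉ pathArcs (P j))}, m ≤ n := by
    rintro m ⟨P', hP'path, hP'disj⟩
    obtain ⟨F', hF'E, hF'card, hF'cut⟩ := hleast.1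
    exact hF'card ▸ MAux.pack_le_cut P' hP'path hP'disj hF'cut
  have hnm0' : m0 ≤ n := hub m0 hPackm0
  have : n = m0 := le_antisymm hnm0 hnm0'
  exact ⟨n, ⟨this ▸ hPackm0, hub⟩, hleast⟩
end
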